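/- Let wt : points(V) → ℝ on an n-dimensional F_q-vector space with every line-weight in {0,1}. Then for every point P, the weights of all points of V are determined by which lines through a fixed 3-space containing P have weight 1 restricted to that 3-space; in particular, at most 2^(q²+q+1)·(q²+q+1) distinct point weights can occur in total. -/

import Mathlib

/-!
Let `W` be a 3-space, i.e. a projective plane of order `q`, and write `f(L)` for the total weight of
the points of a subspace `L`. Every point of `W` other than `P` lies on exactly one line through
`P`, and every point lies on `q + 1` lines of `W`, so double counting incidences gives
`∑_{P ≤ L ≤ W} f(L) = q f(P) + f(W)` and `∑_{L ≤ W} f(L) = (q + 1) f(W)`.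
When all line weights are `0` or `1` these sums count weight-one lines, so
`q f(P) = a - s / (q + 1)` with `a` the number of weight-one lines of `W` through `P` and `s` that
of all weight-one lines of `W`. Hence the pattern of line weights on `W` pins down `f(P)`, and as
`a ≤ q + 1` and `s ≤ q² + q + 1`, few values of `f(P)` are possible.
-/

open Module

/-- The total weight of the points of a subspace `L`. -/
noncomputable def subWeight {F V : Type} [Field F] [AddCommGroup V] [Module F V]
    (wt : Submodule F V → ℝ) (L : Submodule F V) : ℝ :=
  ∑ᶠ P ∈ {P : Submodule F V | finrank F P = 1 ∧ P ≤ L}, wt P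

open Finset

lemma Finset.sum_eq_card_filter_of_forall_eq_zero_or_one {α : Type*} {s : Finset α}
    {g : α → ℝ} (h : ∀ x ∈ s, g x = 0 ∨ g x = 1) :
    ∑ x ∈ s, g x = #{x ∈ s | g x = 1} := by
  rw [← sum_boole]
  refine sum_congr rfl fun x hx => ?_
  rcases h x hx with h | h <;> simp [h]

variable {F V : Type} [Field F] [AddCommGroup V] [Module F V]

namespace Submodule

instance finite_of_finite_of_finiteDimensional [Finite F] [FiniteDimensional F V] :
    Finite (Submodule F V) :=
  have : Finite V := Module.finite_of_finite F
  Finite.of_injective SetLike.coe SetLike.coe_injective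

variable [FiniteDimensional F V]

lemma finrank_sup_eq_two {P Q : Submodule F V} (hP : finrank F P = 1) (hQ : finrank F Q = 1)
    (hPQ : P ≠ Q) : finrank F ↥(P ⊔ Q) = 2 := by
  have hinf : finrank F ↥(P ⊓ Q) < finrank F P := by
    refine finrank_lt_finrank_of_lt (inf_le_left.lt_of_ne fun h => hPQ ?_)
    exact eq_of_le_of_finrank_eq (h ▸ inf_le_right) (hP.trans hQ.symm)
  have := finrank_sup_add_finrank_inf_eq P Q
  omega

lemma eq_sup_of_finrank_eq_two {P Q L : Submodule F V} (hP : finrank F P = 1)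
    (hQ : finrank F Q = 1) (hPQ : P ≠ Q) (hL : finrank F L = 2) (hPL : P ≤ L) (hQL : Q ≤ L) :
    L = P ⊔ Q :=
  (eq_of_le_of_finrank_eq (sup_le hPL hQL) (by rw [finrank_sup_eq_two hP hQ hPQ, hL])).symm

lemma exists_le_finrank_eq (U : Submodule F V) {k : ℕ} (hUk : finrank F U ≤ k)
    (hk : k ≤ finrank F V) : ∃ W : Submodule F V, U ≤ W ∧ finrank F W = k := by
  induction k, hUk using Nat.le_induction with
  | base => exact ⟨U, le_rfl, rfl⟩
  | succ k hUk ih =>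
    obtain ⟨W, hUW, hW⟩ := ih (by omega)
    obtain ⟨v, hv⟩ : ∃ v, v ∉ W := by
      by_contra! h
      rw [(eq_top_iff.2 fun v _ => h v : W = ⊤), finrank_top] at hW
      omega
    exact ⟨W ⊔ span F {v}, hUW.trans le_sup_left, by rw [finrank_sup_span_singleton hv, hW]⟩

variable [Fintype F]

noncomputable def subspacesIn (k : ℕ) (W : Submodule F V) : Finset (Submodule F V) :=
  (Set.toFinite {U : Submodule F V | finrank F U = k ∧ U ≤ W}).toFinset

@[simp]
lemma mem_subspacesIn {k : ℕ} {U W : Submodule F V} :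
    U ∈ subspacesIn k W ↔ finrank F U = k ∧ U ≤ W := by
  simp [subspacesIn]

lemma card_subspacesIn_one (L : Submodule F V) :
    #(subspacesIn 1 L) = ∑ i ∈ range (finrank F L), Fintype.card F ^ i := by
  have hpoints : {U : Submodule F V | finrank F U = 1 ∧ U ≤ L} =
      map L.subtype '' {H : Submodule F L | finrank F H = 1} := by
    ext U
    constructor
    · rintro ⟨hU, hUL⟩
      have hmap : map L.subtype (comap L.subtype U) = U := by
        rw [map_comap_subtype, inf_of_le_right hUL]
      refine ⟨comap L.subtype U, ?_, hmap⟩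
      rwa [Set.mem_ofPred_eq, ← finrank_map_subtype_eq, hmap]
    · rintro ⟨H, hH, rfl⟩
      exact ⟨(finrank_map_subtype_eq L H).trans hH, map_subtype_le L H⟩
  rw [subspacesIn, ← Set.ncard_eq_toFinset_card, hpoints,
    Set.ncard_image_of_injective _ (map_injective_of_injective L.injective_subtype),
    ← Nat.card_coe_set_eq]
  calc Nat.card {H : Submodule F L // finrank F H = 1}
      = Nat.card (Projectivization F L) :=
        (Nat.card_congr (Projectivization.equivSubmodule F L)).symm
    _ = _ := by rw [Projectivization.card_of_finrank F L rfl, Nat.card_eq_fintype_card]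

lemma card_subspacesIn_one_of_finrank_eq_two {L : Submodule F V} (hL : finrank F L = 2) :
    #(subspacesIn 1 L) = Fintype.card F + 1 := by
  simp [card_subspacesIn_one, hL, sum_range_succ, add_comm]

lemma card_subspacesIn_one_of_finrank_eq_three {W : Submodule F V} (hW : finrank F W = 3) :
    #(subspacesIn 1 W) = Fintype.card F ^ 2 + Fintype.card F + 1 := by
  simp [card_subspacesIn_one, hW, sum_range_succ]
  ring

open scoped Classical in
lemma filter_subspacesIn_two_eq_singleton {P Q W : Submodule F V} (hP : P ∈ subspacesIn 1 W)
    (hQ : Q ∈ subspacesIn 1 W) (hPQ : P ≠ Q) :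
    {L ∈ subspacesIn 2 W | P ≤ L ∧ Q ≤ L} = {P ⊔ Q} := by
  rw [mem_subspacesIn] at hP hQ
  ext L
  simp only [mem_filter, mem_subspacesIn, mem_singleton]
  constructor
  · rintro ⟨⟨hL, -⟩, hPL, hQL⟩
    exact eq_sup_of_finrank_eq_two hP.1 hQ.1 hPQ hL hPL hQL
  · rintro rfl
    exact ⟨⟨finrank_sup_eq_two hP.1 hQ.1 hPQ, sup_le hP.2 hQ.2⟩, le_sup_left, le_sup_right⟩

end Submodule

open Submodule

noncomputable def weightOfCounts (q a s : ℕ) : ℝ := ((a : ℝ) - s / (q + 1)) / q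

section Weights

open scoped Classical

variable [Fintype F] [FiniteDimensional F V]

lemma subWeight_eq_sum (f : Submodule F V → ℝ) (L : Submodule F V) :
    subWeight f L = ∑ P ∈ subspacesIn 1 L, f P :=
  finsum_mem_eq_finite_toFinset_sum _ _

lemma subWeight_one (L : Submodule F V) : subWeight (fun _ => 1) L = #(subspacesIn 1 L) := by
  simp [subWeight_eq_sum]

lemma sum_subWeight_eq_sum_card_mul {S : Finset (Submodule F V)} {W : Submodule F V}
    (hS : ∀ L ∈ S, L ≤ W) (f : Submodule F V → ℝ) :
    ∑ L ∈ S, subWeight f L = ∑ Q ∈ subspacesIn 1 W, #{L ∈ S | Q ≤ L} * f Q := by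
  simp only [subWeight_eq_sum]
  rw [sum_comm' (t' := subspacesIn 1 W) (s' := fun Q => {L ∈ S | Q ≤ L})]
  · simp only [sum_const, nsmul_eq_mul]
  · intro L Q
    simp only [mem_subspacesIn, mem_filter]
    exact ⟨fun ⟨hL, hQ, hQL⟩ => ⟨⟨hL, hQL⟩, hQ, hQL.trans (hS L hL)⟩,
      fun ⟨⟨hL, hQL⟩, hQ, _⟩ => ⟨hL, hQ, hQL⟩⟩

lemma sum_subWeight_filter_le {P W : Submodule F V} (hP : P ∈ subspacesIn 1 W)
    (f : Submodule F V → ℝ) :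
    ∑ L ∈ subspacesIn 2 W with P ≤ L, subWeight f L =
      (#{L ∈ subspacesIn 2 W | P ≤ L} - 1) * f P + ∑ Q ∈ subspacesIn 1 W, f Q := by
  have hS : ∀ L ∈ {L ∈ subspacesIn 2 W | P ≤ L}, L ≤ W :=
    fun L hL => (mem_subspacesIn.1 (mem_filter.1 hL).1).2
  have hcoeff : ∀ Q ∈ (subspacesIn 1 W).erase P,
      #{L ∈ {L ∈ subspacesIn 2 W | P ≤ L} | Q ≤ L} = 1 := by
    intro Q hQ
    rw [filter_filter, filter_subspacesIn_two_eq_singleton hP (mem_of_mem_erase hQ)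
      (ne_of_mem_erase hQ).symm, card_singleton]
  rw [sum_subWeight_eq_sum_card_mul hS, ← add_sum_erase _ _ hP, ← add_sum_erase _ _ hP,
    sum_congr rfl fun Q hQ => by rw [hcoeff Q hQ], filter_filter]
  simp only [and_self, Nat.cast_one, one_mul]
  ring

section Plane

variable {W : Submodule F V} (hW : finrank F W = 3)
include hW

-- With weight `1`, `sum_subWeight_filter_le` reads `r (q + 1) = (r - 1) + (q² + q + 1)`.
lemma card_filter_le_subspacesIn_two {P : Submodule F V} (hP : P ∈ subspacesIn 1 W) :
    #{L ∈ subspacesIn 2 W | P ≤ L} = Fintype.card F + 1 := by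
  have h := sum_subWeight_filter_le hP fun _ => 1
  rw [sum_congr rfl fun L hL => by rw [subWeight_one, card_subspacesIn_one_of_finrank_eq_two
    (mem_subspacesIn.1 (mem_filter.1 hL).1).1], sum_const, sum_const,
    card_subspacesIn_one_of_finrank_eq_three hW] at h
  simp only [nsmul_eq_mul] at h
  push_cast at h
  have hq : (Fintype.card F : ℝ) ≠ 0 := by exact_mod_cast Fintype.card_ne_zero
  have : (#{L ∈ subspacesIn 2 W | P ≤ L} : ℝ) * Fintype.card F =
      (Fintype.card F + 1) * Fintype.card F := by
    linear_combination h
  exact_mod_cast mul_right_cancel₀ hq this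

lemma sum_subWeight_subspacesIn_two (f : Submodule F V → ℝ) :
    ∑ L ∈ subspacesIn 2 W, subWeight f L =
      (Fintype.card F + 1) * ∑ Q ∈ subspacesIn 1 W, f Q := by
  rw [sum_subWeight_eq_sum_card_mul (fun L hL => (mem_subspacesIn.1 hL).2), mul_sum]
  refine sum_congr rfl fun Q hQ => ?_
  rw [card_filter_le_subspacesIn_two hW hQ]
  push_cast
  ring

lemma card_subspacesIn_two : #(subspacesIn 2 W) = Fintype.card F ^ 2 + Fintype.card F + 1 := by
  have h := sum_subWeight_subspacesIn_two hW fun _ => 1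
  rw [sum_congr rfl fun L hL => by rw [subWeight_one,
    card_subspacesIn_one_of_finrank_eq_two (mem_subspacesIn.1 hL).1], sum_const, sum_const,
    card_subspacesIn_one_of_finrank_eq_three hW] at h
  simp only [nsmul_eq_mul] at h
  push_cast at h
  have hq : (Fintype.card F + 1 : ℝ) ≠ 0 := by positivity
  have : (#(subspacesIn 2 W) : ℝ) * (Fintype.card F + 1) =
      (Fintype.card F ^ 2 + Fintype.card F + 1) * (Fintype.card F + 1) := by
    linear_combination h
  exact_mod_cast mul_right_cancel₀ hq this

lemma mul_apply_eq_sum_subWeight {P : Submodule F V} (hP : P ∈ subspacesIn 1 W)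
    (f : Submodule F V → ℝ) :
    Fintype.card F * f P = ∑ L ∈ subspacesIn 2 W with P ≤ L, subWeight f L -
      (∑ L ∈ subspacesIn 2 W, subWeight f L) / (Fintype.card F + 1) := by
  rw [sum_subWeight_filter_le hP, sum_subWeight_subspacesIn_two hW,
    card_filter_le_subspacesIn_two hW hP, mul_div_cancel_left₀ _ (by positivity)]
  push_cast
  ring

variable {f : Submodule F V → ℝ}
  (hf : ∀ L ∈ subspacesIn 2 W, subWeight f L = 0 ∨ subWeight f L = 1)
include hf

lemma apply_eq_weightOfCounts {P : Submodule F V} (hP : P ∈ subspacesIn 1 W) :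
    f P = weightOfCounts (Fintype.card F) #{L ∈ subspacesIn 2 W | P ≤ L ∧ subWeight f L = 1}
      #{L ∈ subspacesIn 2 W | subWeight f L = 1} := by
  rw [weightOfCounts, eq_div_iff (by exact_mod_cast Fintype.card_ne_zero), mul_comm,
    mul_apply_eq_sum_subWeight hW hP, sum_eq_card_filter_of_forall_eq_zero_or_one hf,
    sum_eq_card_filter_of_forall_eq_zero_or_one fun L hL => hf L (mem_filter.1 hL).1,
    filter_filter]

lemma apply_eq_apply_of_subWeight_eq_one_iff {g : Submodule F V → ℝ}
    (hg : ∀ L ∈ subspacesIn 2 W, subWeight g L = 0 ∨ subWeight g L = 1)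
    (hfg : ∀ L ∈ subspacesIn 2 W, subWeight f L = 1 ↔ subWeight g L = 1)
    {P : Submodule F V} (hP : P ∈ subspacesIn 1 W) : f P = g P := by
  rw [apply_eq_weightOfCounts hW hf hP, apply_eq_weightOfCounts hW hg hP,
    filter_congr fun L hL => and_congr_right_iff.2 fun _ => hfg L hL, filter_congr hfg]

lemma apply_mem_image_weightOfCounts {P : Submodule F V} (hP : P ∈ subspacesIn 1 W) :
    f P ∈ (range (Fintype.card F + 2) ×ˢ range (Fintype.card F ^ 2 + Fintype.card F + 2)).image
      fun as => weightOfCounts (Fintype.card F) as.1 as.2 := by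
  refine mem_image.2 ⟨(#{L ∈ subspacesIn 2 W | P ≤ L ∧ subWeight f L = 1},
    #{L ∈ subspacesIn 2 W | subWeight f L = 1}),
    mem_product.2 ⟨mem_range.2 ?_, mem_range.2 ?_⟩,
    (apply_eq_weightOfCounts hW hf hP).symm⟩
  · refine Nat.lt_succ_of_le ((card_le_card fun L hL => ?_).trans
      (card_filter_le_subspacesIn_two hW hP).le)
    exact mem_filter.2 ⟨(mem_filter.1 hL).1, (mem_filter.1 hL).2.1⟩
  · exact Nat.lt_succ_of_le ((card_filter_le _ _).trans (card_subspacesIn_two hW).le)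

end Plane

end Weights

/-- If all line weights lie in `{0,1}`, then the weights of points inside any fixed
3-space are determined by the `{0,1}`-pattern of line weights of that 3-space, and
in total at most `2^(q²+q+1)·(q²+q+1)` distinct point weights can occur. -/
theorem stmt_12 (q n : ℕ) (F V : Type) [Field F] [Fintype F] (hq : Fintype.card F = q)
    [AddCommGroup V] [Module F V] (hn : 3 ≤ n) (hdim : finrank F V = n)
    (wt : Submodule F V → ℝ)
    (hline : ∀ L : Submodule F V, finrank F L = 2 →
      subWeight wt L = 0 ∨ subWeight wt L = 1) :
    (∀ wt' : Submodule F V → ℝ,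
      (∀ L : Submodule F V, finrank F L = 2 →
        subWeight wt' L = 0 ∨ subWeight wt' L = 1) →
      ∀ W : Submodule F V, finrank F W = 3 →
        (∀ L : Submodule F V, finrank F L = 2 → L ≤ W →
          (subWeight wt L = 1 ↔ subWeight wt' L = 1)) →
        ∀ P : Submodule F V, finrank F P = 1 → P ≤ W → wt' P = wt P) ∧
    Nat.card {w : ℝ | ∃ P : Submodule F V, finrank F P = 1 ∧ wt P = w}
      ≤ 2 ^ (q ^ 2 + q + 1) * (q ^ 2 + q + 1) := by
  subst hq hdim
  have : FiniteDimensional F V := .of_finrank_pos (by omega)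
  refine ⟨fun wt' hline' W hW hpat P hP hPW => ?_, ?_⟩
  · refine apply_eq_apply_of_subWeight_eq_one_iff hW
      (fun L hL => hline' L (mem_subspacesIn.1 hL).1) (fun L hL => hline L (mem_subspacesIn.1 hL).1)
      (fun L hL => ?_) (mem_subspacesIn.2 ⟨hP, hPW⟩)
    exact (hpat L (mem_subspacesIn.1 hL).1 (mem_subspacesIn.1 hL).2).symm
  · set q := Fintype.card F
    have hweights : {w : ℝ | ∃ P : Submodule F V, finrank F P = 1 ∧ wt P = w} ⊆
        (range (q + 2) ×ˢ range (q ^ 2 + q + 2)).image fun as => weightOfCounts q as.1 as.2 := by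
      rintro _ ⟨P, hP, rfl⟩
      obtain ⟨W, hPW, hW⟩ := P.exists_le_finrank_eq (k := 3) (by omega) (by omega)
      exact apply_mem_image_weightOfCounts hW (fun L hL => hline L (mem_subspacesIn.1 hL).1)
        (mem_subspacesIn.2 ⟨hP, hPW⟩)
    calc Nat.card _ ≤ #((range (q + 2) ×ˢ range (q ^ 2 + q + 2)).image
          fun as => weightOfCounts q as.1 as.2) := by
          rw [Nat.card_coe_set_eq, ← Set.ncard_coe_finset]
          exact Set.ncard_le_ncard hweights
      _ ≤ (q + 2) * (q ^ 2 + q + 2) := card_image_le.trans (by simp)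
      _ ≤ (q ^ 2 + q + 1) * 2 ^ (q ^ 2 + q + 1) :=
          Nat.mul_le_mul (by nlinarith [Fintype.card_pos (α := F)]) Nat.lt_two_pow_self
      _ = _ := mul_comm _ _
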